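/- Let k ≥ 2 be an integer, let F : ℤ → ℤ be any k-step Fibonacci sequence, and let c be an integer. Then the subsequence G : ℤ → ℤ defined by G(n) = F(k·n + c) satisfies, for every integer n, G(n) = ∑_{i=1}^{k} P(k,i) · G(n - i). -/

import Mathlib

/-!
The generating polynomial `pᵣ(x) = ∑ᵢ P(r,i) xⁱ` satisfies `p₀ = -1` and
`pᵣ₊₁ = pᵣ · (2 - x) + 1`, so `pᵣ(x) = ∑_{t<r} (2 - x)ᵗ - (2 - x)ʳ` in every ring.
For a `k`-step Fibonacci sequence `F`, subtracting two consecutive instances of the recurrence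
gives `F(m - k) = 2 F(m) - F(m + 1)`: the operator `x = 2 - E`, with `E` the forward shift,
acts on `F` as the shift by `-k`. Substituting it (so that `2 - x = E`) turns `pₖ(x) F` at `m`
into `∑_{t<k} F(m + t) - F(m + k) = 0`, and as `P(k,0) = -1` this reads
`F(m) = ∑_{i=1}^k P(k,i) F(m - i k)`; now take `m = k n + c`.
-/

def P : ℕ → ℕ → ℤ
  | 0, 0 => -1
  | 0, _ + 1 => 0
  | _ + 1, 0 => -1
  | i + 1, j + 1 => 2 * P i (j + 1) - P i j

open Finset

lemma P_zero_right (i : ℕ) : P i 0 = -1 := by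
  cases i <;> rfl

lemma P_succ_succ (i j : ℕ) : P (i + 1) (j + 1) = 2 * P i (j + 1) - P i j := rfl

lemma P_eq_zero_of_lt : ∀ {i j : ℕ}, i < j → P i j = 0
  | 0, _ + 1, _ => rfl
  | i + 1, j + 1, h => by
    rw [P_succ_succ, P_eq_zero_of_lt (by omega : i < j + 1), P_eq_zero_of_lt (by omega : i < j),
      mul_zero, sub_zero]

section GeneratingFunction

variable {R : Type*} [Ring R]

lemma sum_P_succ_mul_pow (r : ℕ) (x : R) :
    ∑ i ∈ range (r + 2), (P (r + 1) i : R) * x ^ i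
      = (∑ i ∈ range (r + 1), (P r i : R) * x ^ i) * (2 - x) + 1 := by
  have shifted : ∑ i ∈ range (r + 1), (P r (i + 1) : R) * x ^ (i + 1)
      = ∑ i ∈ range (r + 1), (P r i : R) * x ^ i + 1 := by
    have h := sum_range_succ' (fun i => (P r i : R) * x ^ i) (r + 1)
    rw [sum_range_succ, P_eq_zero_of_lt (Nat.lt_succ_self r), P_zero_right] at h
    simp only [Int.cast_zero, zero_mul, add_zero, Int.cast_neg, Int.cast_one, pow_zero,
      mul_one] at h
    rw [h, neg_add_cancel_right]
  have split_term (i : ℕ) : (P (r + 1) (i + 1) : R) * x ^ (i + 1)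
      = 2 * ((P r (i + 1) : R) * x ^ (i + 1)) - (P r i : R) * x ^ i * x := by
    rw [P_succ_succ, pow_succ]
    push_cast
    noncomm_ring
  rw [sum_range_succ', P_zero_right]
  simp only [split_term, sum_sub_distrib, ← mul_sum, ← sum_mul, shifted, Int.cast_neg,
    Int.cast_one]
  noncomm_ring

theorem sum_P_mul_pow (r : ℕ) (x : R) :
    ∑ i ∈ range (r + 1), (P r i : R) * x ^ i = ∑ t ∈ range r, (2 - x) ^ t - (2 - x) ^ r := by
  induction r with
  | zero => simp [P]
  | succ r ih =>
    rw [sum_P_succ_mul_pow, ih, sub_mul, sum_mul]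
    simp only [← pow_succ]
    rw [sum_range_succ', pow_zero]
    abel

end GeneratingFunction

def forwardShift : Module.End ℤ (ℤ → ℤ) := LinearMap.funLeft ℤ ℤ (· + 1)

lemma forwardShift_pow_apply (t : ℕ) (g : ℤ → ℤ) (m : ℤ) :
    (forwardShift ^ t) g m = g (m + t) := by
  induction t generalizing m with
  | zero => simp
  | succ t ih =>
    rw [pow_succ', Module.End.mul_apply, forwardShift, LinearMap.funLeft_apply, ← forwardShift,
      ih]
    push_cast
    ring_nf

lemma two_sub_forwardShift_apply (g : ℤ → ℤ) (m : ℤ) :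
    (2 - forwardShift) g m = 2 * g m - g (m + 1) := by
  simp [forwardShift, LinearMap.funLeft_apply, Module.End.ofNat_apply]

def IsKStepFibonacci (k : ℕ) (F : ℤ → ℤ) : Prop :=
  ∀ n : ℤ, F n = ∑ i ∈ Icc 1 k, F (n - (i : ℤ))

namespace IsKStepFibonacci

variable {k : ℕ} {F : ℤ → ℤ}

lemma add_eq_sum (hF : IsKStepFibonacci k F) (m : ℤ) :
    F (m + k) = ∑ t ∈ range k, F (m + t) := by
  rw [hF]
  refine sum_nbij' (k - ·) (k - ·) ?_ ?_ ?_ ?_ ?_ <;> intro i hi <;>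
    simp only [mem_Icc, mem_range] at hi ⊢
  iterate 4 omega
  rw [Nat.cast_sub hi.2]
  ring_nf

lemma sub_eq (hF : IsKStepFibonacci k F) (m : ℤ) : F (m - k) = 2 * F m - F (m + 1) := by
  obtain ⟨a, rfl⟩ : ∃ a, m = a + k := ⟨m - k, by ring⟩
  have telescope :
      ∑ t ∈ range k, F (a + 1 + t) - ∑ t ∈ range k, F (a + t) = F (a + k) - F a := by
    rw [← sum_sub_distrib]
    simpa [← add_assoc, add_right_comm] using sum_range_sub (fun t : ℕ => F (a + t)) k
  rw [← hF.add_eq_sum, ← hF.add_eq_sum] at telescope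
  rw [add_sub_cancel_right, add_right_comm]
  linarith

lemma two_sub_forwardShift_pow_apply (hF : IsKStepFibonacci k F) (i : ℕ) (m : ℤ) :
    ((2 - forwardShift) ^ i) F m = F (m - i * k) := by
  induction i generalizing m with
  | zero => simp
  | succ i ih =>
    rw [pow_succ', Module.End.mul_apply, two_sub_forwardShift_apply, ih, ih,
      show m + 1 - i * k = m - i * k + 1 by ring, ← hF.sub_eq]
    push_cast
    ring_nf

theorem eq_sum_P_mul (hF : IsKStepFibonacci k F) (m : ℤ) :
    F m = ∑ i ∈ Icc 1 k, P k i * F (m - i * k) := by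
  have h := congrArg (fun A : Module.End ℤ (ℤ → ℤ) => A F m)
    (sum_P_mul_pow k (2 - forwardShift))
  simp only [sub_sub_cancel, LinearMap.coe_sum, Finset.sum_apply, LinearMap.sub_apply,
    Module.End.mul_apply, Module.End.intCast_apply, Pi.smul_apply, Pi.sub_apply, smul_eq_mul,
    hF.two_sub_forwardShift_pow_apply, forwardShift_pow_apply, ← hF.add_eq_sum, sub_self] at h
  rw [Nat.range_succ_eq_Icc_zero, ← insert_Icc_add_one_left_eq_Icc (Nat.zero_le k),
    sum_insert (by simp), P_zero_right] at h
  simp only [zero_add, Nat.cast_zero, zero_mul, sub_zero, neg_one_mul] at h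
  linarith

end IsKStepFibonacci

theorem kstep_mod_subsequence_recursion_general (k : ℕ) (F : ℤ → ℤ)
    (hF : ∀ n : ℤ, F n = ∑ i ∈ Finset.Icc 1 k, F (n - (i : ℤ)))
    (c : ℤ) (G : ℤ → ℤ) (hG : ∀ n : ℤ, G n = F ((k : ℤ) * n + c)) :
    ∀ n : ℤ, G n = ∑ i ∈ Finset.Icc 1 k, P k i * G (n - (i : ℤ)) := by
  intro n
  rw [hG, IsKStepFibonacci.eq_sum_P_mul hF]
  refine sum_congr rfl fun i _ => ?_
  rw [hG]
  ring_nf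

/-- For `k ≥ 2`, a `k`-step Fibonacci sequence `F : ℤ → ℤ`, and any integer `c`,
the subsequence `G n = F (k*n + c)` satisfies `G n = ∑_{i=1}^k P k i * G (n - i)`. -/
theorem kstep_mod_subsequence_recursion (k : ℕ) (hk : 2 ≤ k) (F : ℤ → ℤ)
    (hF : ∀ n : ℤ, F n = ∑ i ∈ Finset.Icc 1 k, F (n - (i : ℤ)))
    (c : ℤ) (G : ℤ → ℤ) (hG : ∀ n : ℤ, G n = F ((k : ℤ) * n + c)) :
    ∀ n : ℤ, G n = ∑ i ∈ Finset.Icc 1 k, P k i * G (n - (i : ℤ)) :=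
  kstep_mod_subsequence_recursion_general k F hF c G hG
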